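/- Saturation for noisy data: let A be an accretive bounded linear operator on a Hilbert space H with R(A) ≠ H, and let u ∈ H. Define P_δ(u) = sup over Δ ∈ H with ‖Δ‖ ≤ δ of the inf over γ > 0 of ‖-γ(A + γI)⁻¹u + (A + γI)⁻¹Δ‖. If P_δ(u) = o(δ^{1/2}) as δ → 0 from the right, then u = 0. -/

import Mathlib

open Filter Asymptotics
open scoped Topology

/-!
Write `R γ = (A + γ)⁻¹`. If `u ≠ 0`, the bias `γ ‖R γ u‖ ≥ γ ‖u‖ / (‖A‖ + γ)` is of order `γ`.
Since `A` is not surjective, `t ‖R t‖ ≥ 1` (otherwise `A = (A + t)(1 - t R t)` would be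
invertible), so some `Δ` with `‖Δ‖ ≤ δ` has noise `‖R t Δ‖ ≳ δ / t`. Accretivity makes
`γ ↦ ‖R γ Δ‖` nonincreasing and `γ ↦ γ ‖R γ x‖` nondecreasing. Suppose both `Δ` and `-Δ` admit
parameters `γ±` with error `< ε √δ`. Pulling both errors back to `τ = min γ₊ γ₋` and adding them
cancels the noise and bounds the bias at `τ` by `ε √δ`; the noise bound then forces `τ > t`, so
the bias at `t ≈ √δ / ε` is below `ε √δ`, which is impossible for small `ε`.
-/

section Resolvent

variable {𝕜 H : Type*} [RCLike 𝕜] [NormedAddCommGroup H] [InnerProductSpace 𝕜 H]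

def IsAccretive (A : H →L[𝕜] H) : Prop :=
  ∀ v : H, 0 ≤ RCLike.re (inner 𝕜 (A v) v : 𝕜)

def IsResolventFamily (A : H →L[𝕜] H) (R : ℝ → H →L[𝕜] H) : Prop :=
  ∀ γ : ℝ, 0 < γ →
    (A + (γ : 𝕜) • (1 : H →L[𝕜] H)).comp (R γ) = 1 ∧
    (R γ).comp (A + (γ : 𝕜) • (1 : H →L[𝕜] H)) = 1

theorem norm_add_ofReal_smul_le {x z : H} (hxz : 0 ≤ RCLike.re (inner 𝕜 x z : 𝕜))
    {a b : ℝ} (ha : 0 ≤ a) (hab : a ≤ b) : ‖x + (a : 𝕜) • z‖ ≤ ‖x + (b : 𝕜) • z‖ := by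
  have hsq (c : ℝ) : ‖x + (c : 𝕜) • z‖ ^ 2 =
      ‖x‖ ^ 2 + 2 * c * RCLike.re (inner 𝕜 x z : 𝕜) + c ^ 2 * ‖z‖ ^ 2 := by
    rw [norm_add_sq (𝕜 := 𝕜), inner_smul_right, RCLike.re_ofReal_mul, norm_smul,
      RCLike.norm_ofReal, mul_pow, sq_abs]
    ring
  rw [← pow_le_pow_iff_left₀ (norm_nonneg _) (norm_nonneg _) two_ne_zero, hsq, hsq]
  gcongr

namespace IsResolventFamily

variable {A : H →L[𝕜] H} {R : ℝ → H →L[𝕜] H} {τ γ : ℝ}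

theorem apply_resolvent (hR : IsResolventFamily A R) (hγ : 0 < γ) (x : H) :
    A (R γ x) + (γ : 𝕜) • R γ x = x := by
  simpa using congr($((hR γ hγ).1) x)

theorem resolvent_apply (hR : IsResolventFamily A R) (hγ : 0 < γ) (x : H) :
    R γ (A x + (γ : 𝕜) • x) = x := by
  simpa using congr($((hR γ hγ).2) x)

theorem add_smul_apply_comm (hR : IsResolventFamily A R) (hτ : 0 < τ) (t : ℝ) (x : H) :
    A (R τ x) + (t : 𝕜) • R τ x = R τ (A x + (t : 𝕜) • x) := by
  have hsplit : A x + (t : 𝕜) • x = (A x + (τ : 𝕜) • x) + ((t - τ : ℝ) : 𝕜) • x := by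
    push_cast; module
  rw [hsplit, map_add, map_smul, hR.resolvent_apply hτ]
  linear_combination (norm := skip) hR.apply_resolvent hτ x
  push_cast; module

variable (hR : IsResolventFamily A R) (hA : IsAccretive A)
include hR

theorem norm_le_mul_norm_apply (hγ : 0 < γ) (x : H) : ‖x‖ ≤ (‖A‖ + γ) * ‖R γ x‖ :=
  calc ‖x‖ = ‖A (R γ x) + (γ : 𝕜) • R γ x‖ := by rw [hR.apply_resolvent hγ]
    _ ≤ ‖A‖ * ‖R γ x‖ + γ * ‖R γ x‖ := by
      grw [norm_add_le, A.le_opNorm, norm_smul, RCLike.norm_ofReal, abs_of_pos hγ]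
    _ = (‖A‖ + γ) * ‖R γ x‖ := by ring

theorem one_le_mul_opNorm [CompleteSpace H] (hrange : Set.range A ≠ Set.univ) (hγ : 0 < γ) :
    1 ≤ γ * ‖R γ‖ := by
  by_contra! hlt
  have hsmall : ‖(γ : 𝕜) • R γ‖ < 1 := by rwa [norm_smul, RCLike.norm_ofReal, abs_of_pos hγ]
  have hfactor : A = (A + (γ : 𝕜) • 1) * (1 - (γ : 𝕜) • R γ) := by
    rw [mul_sub, mul_one, mul_smul_comm, ContinuousLinearMap.mul_def, (hR γ hγ).1]
    abel
  have hunit : IsUnit (A + (γ : 𝕜) • 1) := ⟨⟨_, R γ, (hR γ hγ).1, (hR γ hγ).2⟩, rfl⟩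
  have hA : IsUnit A := hfactor ▸ hunit.mul (isUnit_one_sub_of_norm_lt_one hsmall)
  exact hrange (Set.range_eq_univ.2 (ContinuousLinearMap.isUnit_iff_bijective.1 hA).2)

include hA

theorem norm_apply_le_of_le (hτ : 0 < τ) (hτγ : τ ≤ γ) (y : H) : ‖R γ y‖ ≤ ‖R τ y‖ := by
  set w := R τ (R γ y)
  have h₁ : A w + (τ : 𝕜) • w = R γ y := hR.apply_resolvent hτ _
  have h₂ : A w + (γ : 𝕜) • w = R τ y := by
    rw [hR.add_smul_apply_comm hτ, hR.apply_resolvent (hτ.trans_le hτγ)]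
  rw [← h₁, ← h₂]
  exact norm_add_ofReal_smul_le (hA w) hτ.le hτγ

theorem mul_norm_apply_le_of_le (hτ : 0 < τ) (hτγ : τ ≤ γ) (x : H) :
    τ * ‖R τ x‖ ≤ γ * ‖R γ x‖ := by
  have hγ := hτ.trans_le hτγ
  set w := R τ (R γ x)
  have h₁ : A w + (τ : 𝕜) • w = R γ x := hR.apply_resolvent hτ _
  have h₂ : A w + (γ : 𝕜) • w = R τ x := by
    rw [hR.add_smul_apply_comm hτ, hR.apply_resolvent hγ]
  have hscale (a b : ℝ) (ha : 0 ≤ a) :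
      a * ‖A w + (b : 𝕜) • w‖ = ‖((a * b : ℝ) : 𝕜) • w + (a : 𝕜) • A w‖ := by
    have hv : ((a * b : ℝ) : 𝕜) • w + (a : 𝕜) • A w = (a : 𝕜) • (A w + (b : 𝕜) • w) := by
      push_cast; module
    rw [hv, norm_smul, RCLike.norm_ofReal, abs_of_nonneg ha]
  have hpos : 0 ≤ RCLike.re (inner 𝕜 (((τ * γ : ℝ) : 𝕜) • w) (A w) : 𝕜) := by
    rw [inner_smul_left, RCLike.conj_ofReal, RCLike.re_ofReal_mul, inner_re_symm]
    exact mul_nonneg (by positivity) (hA w)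
  calc τ * ‖R τ x‖ = ‖((τ * γ : ℝ) : 𝕜) • w + (τ : 𝕜) • A w‖ := by rw [← h₂, hscale τ γ hτ.le]
    _ ≤ ‖((τ * γ : ℝ) : 𝕜) • w + (γ : 𝕜) • A w‖ := norm_add_ofReal_smul_le hpos hτ.le hτγ
    _ = γ * ‖R γ x‖ := by rw [← h₁, hscale γ τ hγ.le, mul_comm τ γ]

-- The noise terms of `Δ` and `-Δ` cancel once both errors are pulled back to the smaller
-- parameter.
theorem min_mul_norm_apply_lt {u Δ : H} {γ₁ γ₂ c : ℝ} (hγ₁ : 0 < γ₁) (hγ₂ : 0 < γ₂)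
    (h₁ : ‖-((γ₁ : 𝕜) • R γ₁ u) + R γ₁ Δ‖ < c) (h₂ : ‖-((γ₂ : 𝕜) • R γ₂ u) + R γ₂ (-Δ)‖ < c) :
    min γ₁ γ₂ * ‖R (min γ₁ γ₂) u‖ < c := by
  set τ := min γ₁ γ₂
  have hτ : 0 < τ := lt_min hγ₁ hγ₂
  have herror (γ : ℝ) (Δ : H) : -((γ : 𝕜) • R γ u) + R γ Δ = R γ (Δ - (γ : 𝕜) • u) := by
    rw [map_sub, map_smul]; abel
  have hpull {γ : ℝ} (hγ : 0 < γ) (hτγ : τ ≤ γ) (z : H) (hz : ‖R γ z‖ < c) :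
      τ * ‖R τ z‖ < γ * c :=
    (hR.mul_norm_apply_le_of_le hA hτ hτγ z).trans_lt (mul_lt_mul_of_pos_left hz hγ)
  have hsum : R τ (Δ - (γ₁ : 𝕜) • u) + R τ (-Δ - (γ₂ : 𝕜) • u) =
      -(((γ₁ + γ₂ : ℝ) : 𝕜) • R τ u) := by
    rw [← map_add, ← map_smul, ← map_neg]
    congr 1
    push_cast; module
  have hsum_lt : (γ₁ + γ₂) * (τ * ‖R τ u‖) < (γ₁ + γ₂) * c :=
    calc (γ₁ + γ₂) * (τ * ‖R τ u‖)
        = τ * ‖R τ (Δ - (γ₁ : 𝕜) • u) + R τ (-Δ - (γ₂ : 𝕜) • u)‖ := by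
          rw [hsum, norm_neg, norm_smul, RCLike.norm_ofReal, abs_of_pos (by positivity)]; ring
      _ ≤ τ * ‖R τ (Δ - (γ₁ : 𝕜) • u)‖ + τ * ‖R τ (-Δ - (γ₂ : 𝕜) • u)‖ := by
          rw [← mul_add]; gcongr; exact norm_add_le _ _
      _ < γ₁ * c + γ₂ * c :=
          add_lt_add (hpull hγ₁ (min_le_left _ _) _ (herror γ₁ Δ ▸ h₁))
            (hpull hγ₂ (min_le_right _ _) _ (herror γ₂ (-Δ) ▸ h₂))
      _ = (γ₁ + γ₂) * c := by ring
  exact lt_of_mul_lt_mul_left hsum_lt (by positivity)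

theorem mul_norm_apply_lt_of_error_lt {u Δ : H} {t c γ₁ γ₂ : ℝ} (ht : 0 < t)
    (hΔ : 2 * c ≤ ‖R t Δ‖) (hγ₁ : 0 < γ₁) (hγ₂ : 0 < γ₂)
    (h₁ : ‖-((γ₁ : 𝕜) • R γ₁ u) + R γ₁ Δ‖ < c) (h₂ : ‖-((γ₂ : 𝕜) • R γ₂ u) + R γ₂ (-Δ)‖ < c) :
    t * ‖R t u‖ < c := by
  have hbias := hR.min_mul_norm_apply_lt hA hγ₁ hγ₂ h₁ h₂
  set τ := min γ₁ γ₂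
  have hτ : 0 < τ := lt_min hγ₁ hγ₂
  have htτ : t < τ := by
    by_contra! hτt
    have hnoise (Δ' : H) (hΔ' : ‖R τ Δ'‖ = ‖R τ Δ‖) (h : ‖-((τ : 𝕜) • R τ u) + R τ Δ'‖ < c) :
        False := by
      have hrev := norm_sub_norm_le (R τ Δ') ((τ : 𝕜) • R τ u)
      rw [norm_smul, RCLike.norm_ofReal, abs_of_pos hτ] at hrev
      rw [neg_add_eq_sub] at h
      have := hR.norm_apply_le_of_le hA hτ hτt Δ
      linarith
    obtain h | h : τ = γ₁ ∨ τ = γ₂ := min_choice γ₁ γ₂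
    · exact hnoise Δ rfl (by rw [h]; exact h₁)
    · exact hnoise (-Δ) (by rw [map_neg, norm_neg]) (by rw [h]; exact h₂)
  exact (hR.mul_norm_apply_le_of_le hA ht htτ.le u).trans_lt hbias

theorem mul_norm_apply_lt_of_forall_error_lt [CompleteSpace H]
    (hrange : Set.range A ≠ Set.univ) {u : H} {δ t c : ℝ} (hδ : 0 < δ) (ht : 0 < t)
    (hc : 4 * t * c ≤ δ)
    (hgood : ∀ Δ : H, ‖Δ‖ ≤ δ → ∃ γ : ℝ, 0 < γ ∧ ‖-((γ : 𝕜) • R γ u) + R γ Δ‖ < c) :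
    t * ‖R t u‖ < c := by
  obtain ⟨y, hy, hyt⟩ := (R t).exists_lt_apply_of_lt_opNorm (r := 1 / (2 * t)) (by
    have := hR.one_le_mul_opNorm hrange ht
    rw [div_lt_iff₀ (by positivity)]; nlinarith)
  set Δ := (δ : 𝕜) • y
  have hΔ : ‖Δ‖ ≤ δ := by
    rw [norm_smul, RCLike.norm_ofReal, abs_of_pos hδ]
    exact mul_le_of_le_one_right hδ.le hy.le
  have hnoise : 2 * c ≤ ‖R t Δ‖ :=
    calc 2 * c ≤ δ * (1 / (2 * t)) := by
          rw [mul_one_div, le_div_iff₀ (by positivity)]; linarith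
      _ ≤ δ * ‖R t y‖ := by gcongr
      _ = ‖R t Δ‖ := by rw [map_smul, norm_smul, RCLike.norm_ofReal, abs_of_pos hδ]
  obtain ⟨γ₁, hγ₁, h₁⟩ := hgood Δ hΔ
  obtain ⟨γ₂, hγ₂, h₂⟩ := hgood (-Δ) (by rwa [norm_neg])
  exact hR.mul_norm_apply_lt_of_error_lt hA ht hnoise hγ₁ hγ₂ h₁ h₂

end IsResolventFamily

end Resolvent

section LavrentievError

variable {𝕜 H : Type*} [RCLike 𝕜] [NormedAddCommGroup H] [NormedSpace 𝕜 H]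
  {R : ℝ → H →L[𝕜] H} {u : H}

theorem exists_error_lt_of_iSup_lt {δ c : ℝ}
    (h : (⨆ Δ : {Δ : H // ‖Δ‖ ≤ δ}, ⨅ γ : {γ : ℝ // 0 < γ},
      ‖-((γ.1 : 𝕜) • R γ.1 u) + R γ.1 Δ.1‖) < c) {Δ : H} (hΔ : ‖Δ‖ ≤ δ) :
    ∃ γ : ℝ, 0 < γ ∧ ‖-((γ : 𝕜) • R γ u) + R γ Δ‖ < c := by
  have : Nonempty {γ : ℝ // 0 < γ} := ⟨⟨1, one_pos⟩⟩
  -- `le_ciSup` needs this bound: the real `⨆` of an unbounded family is the junk value `0`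
  have hbdd : BddAbove (Set.range fun Δ : {Δ : H // ‖Δ‖ ≤ δ} => ⨅ γ : {γ : ℝ // 0 < γ},
      ‖-((γ.1 : 𝕜) • R γ.1 u) + R γ.1 Δ.1‖) := by
    refine ⟨‖((1 : ℝ) : 𝕜) • R 1 u‖ + ‖R 1‖ * δ, Set.forall_mem_range.2 fun Δ => ?_⟩
    have hbelow : BddBelow (Set.range fun γ : {γ : ℝ // 0 < γ} =>
        ‖-((γ.1 : 𝕜) • R γ.1 u) + R γ.1 Δ.1‖) :=
      ⟨0, Set.forall_mem_range.2 fun _ => norm_nonneg _⟩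
    calc (⨅ γ : {γ : ℝ // 0 < γ}, ‖-((γ.1 : 𝕜) • R γ.1 u) + R γ.1 Δ.1‖)
        ≤ ‖-(((1 : ℝ) : 𝕜) • R 1 u) + R 1 Δ.1‖ := ciInf_le hbelow ⟨1, one_pos⟩
      _ ≤ ‖((1 : ℝ) : 𝕜) • R 1 u‖ + ‖R 1‖ * δ := by
          grw [norm_add_le, norm_neg, (R 1).le_opNorm, Δ.2]
  obtain ⟨γ, hγ⟩ := exists_lt_of_ciInf_lt ((le_ciSup hbdd ⟨Δ, hΔ⟩).trans_lt h)
  exact ⟨γ.1, γ.2, hγ⟩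

theorem exists_forall_error_lt_of_isLittleO
    (hP : (fun δ : ℝ => ⨆ Δ : {Δ : H // ‖Δ‖ ≤ δ}, ⨅ γ : {γ : ℝ // 0 < γ},
        ‖-((γ.1 : 𝕜) • R γ.1 u) + R γ.1 Δ.1‖)
      =o[𝓝[>] (0 : ℝ)] (fun δ : ℝ => δ ^ ((1 : ℝ) / 2)))
    {ε B : ℝ} (hε : 0 < ε) (hB : 0 < B) :
    ∃ δ : ℝ, 0 < δ ∧ √δ < B ∧
      ∀ Δ : H, ‖Δ‖ ≤ δ → ∃ γ : ℝ, 0 < γ ∧ ‖-((γ : 𝕜) • R γ u) + R γ Δ‖ < ε * √δ := by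
  rw [show (fun δ : ℝ => δ ^ ((1 : ℝ) / 2)) = Real.sqrt from
    funext fun δ => (Real.sqrt_eq_rpow δ).symm] at hP
  obtain ⟨δ, hPδ, hδ, hδB⟩ := ((hP.def (half_pos hε)).and (eventually_mem_nhdsWithin.and
    (((Real.continuous_sqrt.tendsto' 0 0 Real.sqrt_zero).eventually (gt_mem_nhds hB)).filter_mono
      nhdsWithin_le_nhds))).exists
  have hs : 0 < √δ := Real.sqrt_pos.2 hδ
  refine ⟨δ, hδ, hδB, fun Δ hΔ => exists_error_lt_of_iSup_lt ?_ hΔ⟩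
  refine (Real.le_norm_self _).trans_lt (hPδ.trans_lt ?_)
  rw [Real.norm_of_nonneg hs.le]
  linarith [mul_pos hε hs]

end LavrentievError

/-- saturation for noisy data. Let `A` be accretive on a Hilbert space
`H` with `R(A) ≠ H` and resolvent family `R γ = (A + γ I)⁻¹`, and `u ∈ H`. If the
maximal best possible error
`P_δ(u) = sup_{‖Δ‖≤δ} inf_{γ>0} ‖-γ(A+γI)⁻¹u + (A+γI)⁻¹Δ‖` satisfies
`P_δ(u) = o(δ^{1/2})` as `δ → 0⁺`, then `u = 0`. -/
theorem lavrentiev_saturation_noisy_data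
    {𝕜 : Type*} [RCLike 𝕜] {H : Type*} [NormedAddCommGroup H]
    [InnerProductSpace 𝕜 H] [CompleteSpace H]
    (A : H →L[𝕜] H)
    (hacc : ∀ v : H, 0 ≤ RCLike.re (inner 𝕜 (A v) v : 𝕜))
    (hrange : Set.range A ≠ Set.univ)
    (R : ℝ → H →L[𝕜] H)
    (hinv : ∀ γ : ℝ, 0 < γ →
      (A + (γ : 𝕜) • (1 : H →L[𝕜] H)).comp (R γ) = 1 ∧
      (R γ).comp (A + (γ : 𝕜) • (1 : H →L[𝕜] H)) = 1)
    (u : H)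
    (hP : (fun δ : ℝ => ⨆ Δ : {Δ : H // ‖Δ‖ ≤ δ}, ⨅ γ : {γ : ℝ // 0 < γ},
        ‖-((γ.1 : 𝕜) • R γ.1 u) + R γ.1 Δ.1‖)
      =o[𝓝[>] (0 : ℝ)] (fun δ : ℝ => δ ^ ((1 : ℝ) / 2))) :
    u = 0 := by
  by_contra hu
  have hu0 : 0 < ‖u‖ := norm_pos_iff.2 hu
  set ε := ‖u‖ / (8 * (‖A‖ + ‖u‖))
  have hε : 0 < ε := by positivity
  have hεu : 8 * ε * (‖A‖ + ‖u‖) = ‖u‖ := by simp only [ε]; field_simp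
  obtain ⟨δ, hδ, hsu, hgood⟩ := exists_forall_error_lt_of_isLittleO hP hε hu0
  set s := √δ
  have hs : 0 < s := Real.sqrt_pos.2 hδ
  set t := s / (4 * ε)
  have ht : 0 < t := by positivity
  have ht4 : 4 * ε * t = s := by simp only [t]; field_simp
  have hbias := IsResolventFamily.mul_norm_apply_lt_of_forall_error_lt hinv hacc hrange hδ ht
    (by linear_combination s * ht4 + Real.mul_self_sqrt hδ.le) hgood
  have hlower := IsResolventFamily.norm_le_mul_norm_apply hinv ht u
  have hu_lt : s * ‖u‖ < s * (4 * ε ^ 2 * ‖A‖ + ε * s) :=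
    calc s * ‖u‖ ≤ 4 * ε * t * ((‖A‖ + t) * ‖R t u‖) := by rw [← ht4]; gcongr
      _ = 4 * ε * (‖A‖ + t) * (t * ‖R t u‖) := by ring
      _ < 4 * ε * (‖A‖ + t) * (ε * s) := by gcongr
      _ = s * (4 * ε ^ 2 * ‖A‖ + ε * s) := by linear_combination (ε * s) * ht4
  have hε8 : 8 * ε ≤ 1 := by
    refine le_of_mul_le_mul_right (a := ‖u‖) ?_ hu0
    nlinarith [mul_nonneg hε.le (norm_nonneg A)]
  have hεA : 8 * ε * ‖A‖ ≤ ‖u‖ := by nlinarith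
  nlinarith [lt_of_mul_lt_mul_left hu_lt hs.le, mul_le_mul_of_nonneg_left hεA hε.le]
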